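/- arXiv:2109.10394 — 4 statements merged into one kernel-verified Lean document; each statement's English description precedes it below -/
import Mathlib

section
/- For any odd prime ℓ and integers a₁, a₂ with 0 ≤ a₁, a₂ < ℓ such that the Legendre symbol ((-16a₁ + 8a₂ + 1)/ℓ) = -1, for every non-negative integer n, the number of partitions of ℓn + a₂ having exactly a₁ hook lengths divisible by 2 (counted modulo ℓ, i.e., whose number of 2-hooks is ≡ a₁ (mod ℓ)) is zero. -/
/-!
Encode a Young diagram `μ` by its beta-set `B`, the set of first-column hook lengths. The hooks
of `μ` are exactly the differences `b - m` with `b ∈ B`, `m ∉ B`, `m < b`, and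
`|μ| = ∑ B - (0 + 1 + ⋯ + (#B - 1))`. Adjoining to `B` a new largest element `a` adds `⌊a/2⌋`
minus the number of elements of `B` of the parity of `a` to the number of even hooks; by induction
this gives `8|μ| + 1 = 16 #𝓗₂(μ) + (2(e - o) - 1)²`, where `e` and `o` count the even and odd
elements of `B`. So `8n + 1 - 16 #𝓗₂(μ)` is always a square, and for `n = ℓk + a₂`,
`#𝓗₂(μ) ≡ a₁ (mod ℓ)` it would make `-16a₁ + 8a₂ + 1` a square modulo `ℓ`.
-/

/-- The hook length of the cell in row `i`, column `j` of a Young diagram. -/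
def YoungDiagram.hookLength (μ : YoungDiagram) (i j : ℕ) : ℕ :=
  (μ.rowLen i - j) + (μ.colLen j - i) - 1

/-- The number of cells of `μ` whose hook length is divisible by `t`. -/
def hookCount (t : ℕ) (μ : YoungDiagram) : ℕ :=
  (μ.cells.filter (fun c => t ∣ μ.hookLength c.1 c.2)).card

/-- The Young diagram attached to a partition of `n`. -/
def Nat.Partition.toYoung {n : ℕ} (p : n.Partition) : YoungDiagram :=
  YoungDiagram.ofRowLens (p.parts.sort (· ≥ ·)) (List.Pairwise.sortedGE (p.parts.pairwise_sort _))

/-- `p_t(a,b;n)`: the number of partitions `λ ⊢ n` with `#𝓗_t(λ) ≡ a (mod b)`. -/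
def hookP (t a b n : ℕ) : ℕ :=
  Fintype.card {p : n.Partition // hookCount t p.toYoung % b = a % b}

open Finset

def gapCount (t : ℕ) (B : Finset ℕ) : ℕ :=
  ∑ b ∈ B, #{m ∈ range b \ B | t ∣ b - m}

lemma card_filter_dvd_sub_range (t a : ℕ) : #{m ∈ range a | t ∣ a - m} = a / t := by
  rw [← Nat.card_multiples a t, card_filter, card_filter, ← sum_range_reflect]
  refine sum_congr rfl fun m hm => ?_
  rw [show a - (a - 1 - m) = m + 1 by grind]

lemma card_filter_sdiff_add_card_filter {B : Finset ℕ} {a : ℕ} (hB : ∀ b ∈ B, b < a)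
    (p : ℕ → Prop) [DecidablePred p] :
    #{m ∈ range a \ B | p m} + #{m ∈ B | p m} = #{m ∈ range a | p m} := by
  rw [← card_union_of_disjoint (disjoint_filter_filter disjoint_sdiff_self_left), ← filter_union,
    sdiff_union_of_subset fun b hb => mem_range.mpr (hB b hb)]

lemma gapCount_insert_of_forall_lt (t : ℕ) {B : Finset ℕ} {a : ℕ} (hB : ∀ b ∈ B, b < a) :
    gapCount t (insert a B) = gapCount t B + #{m ∈ range a \ B | t ∣ a - m} := by
  have hsdiff {b} (hb : b ≤ a) : range b \ insert a B = range b \ B :=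
    sdiff_insert_of_notMem (by simpa using hb) _
  rw [gapCount, sum_insert fun h => (hB a h).false, add_comm, hsdiff le_rfl, gapCount]
  congr 1
  exact sum_congr rfl fun b hb => by rw [hsdiff (hB b hb).le]

theorem eight_mul_sum_add_one_eq (B : Finset ℕ) :
    8 * ∑ b ∈ B, (b : ℤ) + 1 = 16 * gapCount 2 B + 8 * ∑ i ∈ range #B, (i : ℤ) +
      (2 * ((#{b ∈ B | Even b} : ℤ) - #{b ∈ B | ¬Even b}) - 1) ^ 2 := by
  induction B using Finset.induction_on_max with
  | empty => simp [gapCount]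
  | insert a B hB ih =>
    have ha : a ∉ B := fun h => (hB a h).false
    have hgap := card_filter_sdiff_add_card_filter hB (2 ∣ a - ·)
    rw [card_filter_dvd_sub_range] at hgap
    have hpar : ∀ m ∈ B, (2 ∣ a - m ↔ (Even m ↔ Even a)) := fun m hm => by
      have := hB m hm
      simp only [Nat.even_iff]
      omega
    rw [filter_congr hpar] at hgap
    have hcard := congrArg (Nat.cast (R := ℤ)) (card_filter_add_card_filter_not (s := B) Even)
    push_cast at hcard
    rw [sum_insert ha, gapCount_insert_of_forall_lt 2 hB, card_insert_of_notMem ha,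
      filter_insert, filter_insert]
    obtain ⟨k, rfl | rfl⟩ := Nat.even_or_odd' a <;>
    · simp only [even_two_mul, Nat.not_even_two_mul_add_one, not_true_eq_false,
        not_false_eq_true, if_true, if_false, iff_true, iff_false] at hgap ⊢
      rw [card_insert_of_notMem (by simp [ha]), sum_range_succ]
      rw [show _ / 2 = k by omega] at hgap
      have hgapz := congrArg (Nat.cast (R := ℤ)) hgap
      push_cast at hgapz ⊢
      linear_combination ih - 16 * hgapz + 8 * hcard

namespace YoungDiagram

variable (μ : YoungDiagram)

lemma lt_colLen_zero_of_mem {i j : ℕ} (h : (i, j) ∈ μ) : i < μ.colLen 0 :=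
  mem_iff_lt_colLen.mp (μ.up_left_mem le_rfl j.zero_le h)

lemma card_cells_eq_sum_rowLen : #μ.cells = ∑ i ∈ range (μ.colLen 0), μ.rowLen i := by
  rw [card_eq_sum_card_fiberwise (f := Prod.fst) fun c hc =>
    mem_range.mpr (μ.lt_colLen_zero_of_mem hc)]
  exact sum_congr rfl fun i _ => (μ.rowLen_eq_card).symm

lemma card_cells_eq_sum_rowLens : #μ.cells = μ.rowLens.sum := by
  rw [card_cells_eq_sum_rowLen, sum_eq_multiset_sum, range_val, Multiset.range, Multiset.map_coe,
    Multiset.sum_coe, rowLens]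

def betaSet : Finset ℕ := (range (μ.colLen 0)).image (μ.hookLength · 0)

/-- The `j`-th smallest natural number outside `μ.betaSet`. -/
def betaGap (j : ℕ) : ℕ := μ.colLen 0 + j - μ.colLen j

lemma colLen_le_colLen_zero (j : ℕ) : μ.colLen j ≤ μ.colLen 0 :=
  μ.colLen_anti 0 j j.zero_le

lemma rowLen_eq_zero_of_colLen_zero_le {i : ℕ} (hi : μ.colLen 0 ≤ i) : μ.rowLen i = 0 := by
  by_contra h
  exact hi.not_gt (mem_iff_lt_colLen.mp (mem_iff_lt_rowLen.mpr (Nat.pos_of_ne_zero h)))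

lemma mem_iff_betaGap_lt {i j : ℕ} : (i, j) ∈ μ ↔ μ.betaGap j < μ.hookLength i 0 := by
  have hrow : (i, j) ∈ μ ↔ j < μ.rowLen i := mem_iff_lt_rowLen
  have hcol : (i, j) ∈ μ ↔ i < μ.colLen j := mem_iff_lt_colLen
  have := μ.colLen_le_colLen_zero j
  unfold betaGap hookLength
  by_cases h : (i, j) ∈ μ <;> simp only [h, true_iff, false_iff] at hrow hcol ⊢ <;> omega

lemma strictMono_betaGap : StrictMono μ.betaGap := by
  refine strictMono_nat_of_lt_succ fun j => ?_
  have := μ.colLen_anti j (j + 1) j.le_succ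
  have := μ.colLen_le_colLen_zero j
  unfold betaGap
  omega

lemma strictAntiOn_hookLength_zero :
    StrictAntiOn (μ.hookLength · 0) (Set.Iio (μ.colLen 0)) := fun i _ i' hi' hii' => by
  have := μ.rowLen_anti i i' hii'.le
  simp only [Set.mem_Iio] at hi'
  simp only [hookLength]
  omega

lemma hookLength_zero_ne_betaGap {i : ℕ} (hi : i < μ.colLen 0) (j : ℕ) :
    μ.hookLength i 0 ≠ μ.betaGap j := by
  intro h
  have hnotmem : (i, j) ∉ μ := by rw [mem_iff_betaGap_lt]; omega
  have hrow : μ.rowLen i ≤ j := not_lt.mp (mt mem_iff_lt_rowLen.mpr hnotmem)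
  have hcol : μ.colLen j ≤ i := not_lt.mp (mt mem_iff_lt_colLen.mpr hnotmem)
  unfold hookLength betaGap at h
  omega

lemma hookLength_zero_eq_zero_of_colLen_zero_le {i : ℕ} (hi : μ.colLen 0 ≤ i) :
    μ.hookLength i 0 = 0 := by
  simp [hookLength, μ.rowLen_eq_zero_of_colLen_zero_le hi, hi]

lemma exists_betaGap_eq {m : ℕ} (hm : m ∉ μ.betaSet) : ∃ j, μ.betaGap j = m := by
  have hm' : ∀ i < μ.colLen 0, μ.hookLength i 0 ≠ m := fun i hi h =>
    hm (mem_image.mpr ⟨i, mem_range.mpr hi, h⟩)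
  have hN : μ.hookLength (μ.colLen 0) 0 ≤ m :=
    (μ.hookLength_zero_eq_zero_of_colLen_zero_le le_rfl).trans_le m.zero_le
  have hex : ∃ k, μ.hookLength k 0 ≤ m := ⟨_, hN⟩
  -- exactly the rows `i < k` have first-column hook above `m`; column `j` will have length `k`
  obtain ⟨k, hkN, hk, hmin⟩ : ∃ k ≤ μ.colLen 0, μ.hookLength k 0 ≤ m ∧
      ∀ i < k, m < μ.hookLength i 0 :=
    ⟨Nat.find hex, Nat.find_min' hex hN, Nat.find_spec hex,
      fun i hi => not_le.mp (Nat.find_min hex hi)⟩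
  have hne := hm' k
  have hrow : μ.colLen 0 ≤ k → μ.rowLen k = 0 := μ.rowLen_eq_zero_of_colLen_zero_le
  unfold hookLength at hk hne
  set j := m + k - μ.colLen 0
  have hnotmem : (k, j) ∉ μ := by
    rw [mem_iff_lt_rowLen]
    omega
  have hmem (hk0 : 0 < k) : (k - 1, j) ∈ μ := by
    have := hmin (k - 1) (by omega)
    rw [mem_iff_lt_rowLen]
    unfold hookLength at this
    omega
  have hcol : μ.colLen j = k := by
    have := mt mem_iff_lt_colLen.mpr hnotmem
    rcases Nat.eq_zero_or_pos k with hk0 | hk0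
    · omega
    · have := mem_iff_lt_colLen.mp (hmem hk0)
      omega
  refine ⟨j, ?_⟩
  unfold betaGap
  omega

lemma hookLength_eq_sub {i j : ℕ} (h : (i, j) ∈ μ) :
    μ.hookLength i j = μ.hookLength i 0 - μ.betaGap j := by
  have hrow := mem_iff_lt_rowLen.mp h
  have hcol := mem_iff_lt_colLen.mp h
  have := μ.colLen_le_colLen_zero j
  unfold hookLength betaGap
  omega

lemma card_betaSet : #μ.betaSet = μ.colLen 0 := by
  rw [betaSet, card_image_of_injOn, card_range]
  exact μ.strictAntiOn_hookLength_zero.injOn.mono fun i hi => mem_range.mp hi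

lemma sum_betaSet :
    ∑ b ∈ μ.betaSet, b = #μ.cells + ∑ i ∈ range (μ.colLen 0), i := by
  rw [betaSet, sum_image fun i hi i' hi' => μ.strictAntiOn_hookLength_zero.injOn
    (mem_range.mp hi) (mem_range.mp hi'), card_cells_eq_sum_rowLen,
    ← sum_range_reflect (fun i => i), ← sum_add_distrib]
  refine sum_congr rfl fun i hi => ?_
  rw [mem_range] at hi
  simp only [hookLength]
  omega

lemma notMem_betaSet_iff {m : ℕ} : m ∉ μ.betaSet ↔ ∃ j, μ.betaGap j = m := by
  refine ⟨μ.exists_betaGap_eq, ?_⟩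
  rintro ⟨j, rfl⟩ h
  obtain ⟨i, hi, hij⟩ := mem_image.mp h
  exact μ.hookLength_zero_ne_betaGap (mem_range.mp hi) j hij

theorem hookCount_eq_gapCount (t : ℕ) : hookCount t μ = gapCount t μ.betaSet := by
  rw [hookCount, gapCount, ← card_sigma]
  refine card_bij (fun c _ => ⟨μ.hookLength c.1 0, μ.betaGap c.2⟩) ?_ ?_ ?_
  · rintro ⟨i, j⟩ hc
    simp only [mem_filter, mem_cells] at hc
    simp only [mem_sigma, mem_filter, mem_sdiff, mem_range, ← μ.hookLength_eq_sub hc.1,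
      ← mem_iff_betaGap_lt, μ.notMem_betaSet_iff]
    exact ⟨mem_image_of_mem _ (mem_range.mpr (μ.lt_colLen_zero_of_mem hc.1)),
      ⟨hc.1, j, rfl⟩, hc.2⟩
  · rintro ⟨i, j⟩ hc ⟨i', j'⟩ hc' h
    simp only [mem_filter, mem_cells] at hc hc'
    simp only [Sigma.mk.injEq, heq_eq_eq] at h
    rw [μ.strictAntiOn_hookLength_zero.injOn (μ.lt_colLen_zero_of_mem hc.1)
      (μ.lt_colLen_zero_of_mem hc'.1) h.1, μ.strictMono_betaGap.injective h.2]
  · rintro ⟨b, m⟩ hbm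
    simp only [mem_sigma, mem_filter, mem_sdiff, mem_range, μ.notMem_betaSet_iff] at hbm
    obtain ⟨hb, ⟨hmb, j, rfl⟩, hdvd⟩ := hbm
    obtain ⟨i, -, rfl⟩ := mem_image.mp hb
    have hc : (i, j) ∈ μ := μ.mem_iff_betaGap_lt.mpr hmb
    exact ⟨(i, j), mem_filter.mpr ⟨hc, (μ.hookLength_eq_sub hc).symm ▸ hdvd⟩, rfl⟩

end YoungDiagram

theorem YoungDiagram.exists_eight_mul_card_add_one_eq (μ : YoungDiagram) :
    ∃ d : ℤ, 8 * #μ.cells + 1 = 16 * hookCount 2 μ + d ^ 2 := by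
  have key := eight_mul_sum_add_one_eq μ.betaSet
  rw [μ.card_betaSet, ← μ.hookCount_eq_gapCount, ← Nat.cast_sum, μ.sum_betaSet] at key
  push_cast at key
  exact ⟨2 * ((#{b ∈ μ.betaSet | Even b} : ℤ) - #{b ∈ μ.betaSet | ¬Even b}) - 1,
    by linear_combination key⟩

lemma Nat.Partition.card_toYoung_cells {n : ℕ} (p : n.Partition) : #p.toYoung.cells = n := by
  rw [YoungDiagram.card_cells_eq_sum_rowLens, toYoung,
    YoungDiagram.rowLens_ofRowLens_eq_self fun x hx => p.parts_pos (by simpa using hx),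
    ← Multiset.sum_coe, Multiset.sort_eq, p.parts_sum]

theorem hookP_two_eq_zero_of_not_isSquare (a b n : ℕ)
    (h : ¬IsSquare ((8 * n + 1 - 16 * a : ℤ) : ZMod b)) : hookP 2 a b n = 0 := by
  rw [hookP, Fintype.card_eq_zero_iff]
  refine ⟨fun ⟨p, hp⟩ => h ?_⟩
  obtain ⟨d, hd⟩ := p.toYoung.exists_eight_mul_card_add_one_eq
  rw [p.card_toYoung_cells] at hd
  have hcount : (hookCount 2 p.toYoung : ZMod b) = a := (ZMod.natCast_eq_natCast_iff' _ _ _).mpr hp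
  have hsq : (8 * n + 1 - 16 * hookCount 2 p.toYoung : ℤ) = d * d := by linear_combination hd
  refine ⟨d, ?_⟩
  push_cast
  rw [← hcount]
  exact_mod_cast congrArg (Int.cast (R := ZMod b)) hsq

theorem vanishing_two_hooks_general (ℓ : ℕ) [Fact ℓ.Prime] (a₁ a₂ : ℕ)
    (hleg : legendreSym ℓ (-16 * a₁ + 8 * a₂ + 1) = -1) (n : ℕ) :
    hookP 2 a₁ ℓ (ℓ * n + a₂) = 0 := by
  refine hookP_two_eq_zero_of_not_isSquare _ _ _ ?_
  convert (legendreSym.eq_neg_one_iff ℓ).mp hleg using 2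
  push_cast
  rw [ZMod.natCast_self]
  ring

theorem vanishing_two_hooks (ℓ : ℕ) [Fact ℓ.Prime] (hodd : ℓ ≠ 2)
    (a₁ a₂ : ℕ) (h₁ : a₁ < ℓ) (h₂ : a₂ < ℓ)
    (hleg : legendreSym ℓ (-16 * a₁ + 8 * a₂ + 1) = -1) (n : ℕ) :
    hookP 2 a₁ ℓ (ℓ * n + a₂) = 0 :=
  vanishing_two_hooks_general ℓ a₁ a₂ hleg n
end

section
/- For any prime ℓ ≡ 2 (mod 3) and integers a₁, a₂ with 0 ≤ a₁, a₂ < ℓ² such that ord_ℓ(-9a₁ + 3a₂ + 1) = 1 (i.e., ℓ divides -9a₁+3a₂+1 exactly once), for every non-negative integer n we have p₃(a₁, ℓ²; ℓ²n + a₂) = 0. -/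
/-!
If `λ` has `s` parts, its β-numbers `β i = λ_i + (s - 1 - i)`, `i < s`, are its first-column
hook lengths. The hook lengths in row `i` are the differences `β i - b` for the numbers `b < β i`
that are not β-numbers, so counting residues mod 3 gives
`#𝓗₃(λ) = ∑ᵢ (β i / 3 - #{i' > i | β i' ≡ β i})`.
With `aᵣ` the number of β-numbers `≡ r (mod 3)`, this turns into the identity
`3|λ| + 1 - 9 #𝓗₃(λ) = x² + xy + y²` for `x = 2a₀ - a₁ - a₂ - 1`, `y = 2a₁ - a₀ - a₂`.

For a prime `ℓ ≡ 2 (mod 3)` cubing is injective on `𝔽_ℓ`, and `x³ - y³ = (x - y)(x² + xy + y²)`,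
so `ℓ ∣ x² + xy + y²` forces `ℓ ∣ x` and `ℓ ∣ y`, hence `ℓ² ∣ x² + xy + y²`. For `λ ⊢ ℓ²n + a₂`
with `#𝓗₃(λ) ≡ a₁ (mod ℓ²)` this number is `≡ -9a₁ + 3a₂ + 1 (mod ℓ²)`, which `ℓ` divides
exactly once.
-/

open Finset

theorem Finset.two_mul_sum_card_filter_lt_add_card {α : Type*} [LinearOrder α] (A : Finset α) :
    2 * ∑ i ∈ A, #{j ∈ A | i < j} + #A = #A * #A := by
  induction A using Finset.induction_on_max with
  | empty => simp
  | insert a A hlt ih =>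
    have ha : a ∉ A := fun h => lt_irrefl a (hlt a h)
    have hbelow : ∀ i ∈ A, #{j ∈ insert a A | i < j} = #{j ∈ A | i < j} + 1 := fun i hi => by
      rw [filter_insert, if_pos (hlt i hi), card_insert_of_notMem (by simp [ha])]
    have htop : #{j ∈ insert a A | a < j} = 0 := by
      simpa [filter_insert] using fun j hj => (hlt j hj).le
    rw [sum_insert ha, htop, sum_congr rfl hbelow, sum_add_distrib, card_insert_of_notMem ha,
      sum_const, smul_eq_mul, mul_one]
    linarith

theorem Finset.two_mul_sum_card_filter_lt_and_eq_add_card {α β : Type*} [LinearOrder α]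
    [DecidableEq β] {S : Finset α} {T : Finset β} {f : α → β} (hf : ∀ i ∈ S, f i ∈ T) :
    2 * ∑ i ∈ S, #{j ∈ S | i < j ∧ f j = f i} + #S = ∑ r ∈ T, #{i ∈ S | f i = r} ^ 2 := by
  have hfiber : ∀ r ∈ T, ∑ i ∈ S with f i = r, #{j ∈ S | i < j ∧ f j = f i}
      = ∑ i ∈ S with f i = r, #{j ∈ {k ∈ S | f k = r} | i < j} := fun r _ =>
    sum_congr rfl fun i hi => by
      rw [(mem_filter.mp hi).2, filter_filter]
      simp_rw [and_comm]
  rw [card_eq_sum_card_fiberwise hf, ← sum_fiberwise_of_maps_to hf, mul_sum, ← sum_add_distrib]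
  refine sum_congr rfl fun r hr => ?_
  rw [hfiber r hr, two_mul_sum_card_filter_lt_add_card, sq]

namespace YoungDiagram

variable (μ : YoungDiagram)

/-- For `i < μ.colLen 0`, `μ.beta i` is the hook length of the cell `(i, 0)`: these form the
β-set of `μ`, and `coBeta` enumerates its complement below `μ.beta 0`. -/
def beta (i : ℕ) : ℕ := μ.rowLen i + (μ.colLen 0 - 1 - i)

def coBeta (j : ℕ) : ℕ := j + (μ.colLen 0 - μ.colLen j)

variable {μ}

theorem lt_rowLen_iff_lt_colLen {i j : ℕ} : j < μ.rowLen i ↔ i < μ.colLen j := by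
  rw [← mem_iff_lt_rowLen, mem_iff_lt_colLen]

theorem beta_strictAntiOn : StrictAntiOn μ.beta (Set.Iio (μ.colLen 0)) := by
  intro i _ i' hi' h
  have := μ.rowLen_anti i i' h.le
  simp only [Set.mem_Iio] at hi'
  unfold beta; omega

theorem coBeta_strictMono : StrictMono μ.coBeta := by
  intro j j' h
  have := μ.colLen_anti j j' h.le
  have := μ.colLen_anti 0 j j.zero_le
  unfold coBeta; omega

theorem coBeta_lt_beta {i j : ℕ} (hj : j < μ.rowLen i) : μ.coBeta j < μ.beta i := by
  have := lt_rowLen_iff_lt_colLen.mp hj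
  have := μ.colLen_anti 0 j j.zero_le
  unfold beta coBeta; omega

theorem hookLength_eq_beta_sub_coBeta {i j : ℕ} (hj : j < μ.rowLen i) :
    μ.hookLength i j = μ.beta i - μ.coBeta j := by
  have := lt_rowLen_iff_lt_colLen.mp hj
  have := μ.colLen_anti 0 j j.zero_le
  unfold hookLength beta coBeta; omega

theorem beta_ne_coBeta {i : ℕ} (hi : i < μ.colLen 0) (j : ℕ) : μ.beta i ≠ μ.coBeta j := by
  have := μ.colLen_anti 0 j j.zero_le
  have := @lt_rowLen_iff_lt_colLen μ i j
  unfold beta coBeta; omega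

theorem filter_mem_image_beta_range_beta {i : ℕ} (hi : i < μ.colLen 0) :
    {b ∈ range (μ.beta i) | b ∈ (range (μ.colLen 0)).image μ.beta}
      = (Ioo i (μ.colLen 0)).image μ.beta := by
  ext b
  simp only [mem_filter, mem_range, mem_image, mem_Ioo]
  constructor
  · rintro ⟨hlt, i', hi', rfl⟩
    refine ⟨i', ⟨?_, hi'⟩, rfl⟩
    by_contra! hle
    exact hlt.not_ge (beta_strictAntiOn.antitoneOn hi' hi hle)
  · rintro ⟨i', ⟨hii', hi'⟩, rfl⟩
    exact ⟨beta_strictAntiOn hi hi' hii', i', hi', rfl⟩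

theorem image_coBeta_range_rowLen {i : ℕ} (hi : i < μ.colLen 0) :
    (range (μ.rowLen i)).image μ.coBeta
      = {b ∈ range (μ.beta i) | b ∉ (range (μ.colLen 0)).image μ.beta} := by
  refine eq_of_subset_of_card_le (fun b hb => ?_) ?_
  · obtain ⟨j, hj, rfl⟩ := mem_image.mp hb
    simp only [mem_filter, mem_range, mem_image, not_exists, not_and]
    exact ⟨coBeta_lt_beta (mem_range.mp hj), fun i' hi' => beta_ne_coBeta hi' j⟩
  · have hsplit := card_filter_add_card_filter_not (s := range (μ.beta i))
      (fun b => b ∈ (range (μ.colLen 0)).image μ.beta)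
    rw [filter_mem_image_beta_range_beta hi,
      card_image_of_injOn (beta_strictAntiOn.injOn.mono fun x hx => (mem_Ioo.mp hx).2)] at hsplit
    rw [card_image_of_injective _ coBeta_strictMono.injective]
    simp only [card_range, Nat.card_Ioo, beta] at hsplit ⊢
    omega

/-- The `β i / t` numbers `b < β i` with `b ≡ β i [MOD t]` are either β-numbers `β i'` with
`i' > i`, or of the form `coBeta j` with `t ∣ β i - coBeta j`, the hook length of `(i, j)`. -/
theorem card_filter_dvd_hookLength_add_card_filter_beta_modEq {t i : ℕ} (ht : 0 < t)
    (hi : i < μ.colLen 0) :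
    #{j ∈ range (μ.rowLen i) | t ∣ μ.hookLength i j}
      + #{i' ∈ Ioo i (μ.colLen 0) | μ.beta i' ≡ μ.beta i [MOD t]} = μ.beta i / t := by
  set B := (range (μ.colLen 0)).image μ.beta
  have hrow : {j ∈ range (μ.rowLen i) | t ∣ μ.hookLength i j}
      = {j ∈ range (μ.rowLen i) | μ.coBeta j ≡ μ.beta i [MOD t]} := by
    refine filter_congr fun j hj => ?_
    have hj := mem_range.mp hj
    rw [hookLength_eq_beta_sub_coBeta hj, Nat.modEq_iff_dvd' (coBeta_lt_beta hj).le]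
  have hcount : #{b ∈ range (μ.beta i) | b ≡ μ.beta i [MOD t]} = μ.beta i / t := by
    rw [← Nat.count_eq_card_filter_range, Nat.count_modEq_card _ ht, if_neg (lt_irrefl _),
      add_zero]
  have hsplit := card_filter_add_card_filter_not
    (s := {b ∈ range (μ.beta i) | b ≡ μ.beta i [MOD t]}) (· ∈ B)
  rw [filter_comm, filter_mem_image_beta_range_beta hi, filter_image,
    card_image_of_injOn
      (beta_strictAntiOn.injOn.mono fun x hx => (mem_Ioo.mp (mem_filter.mp hx).1).2),
    filter_comm, ← image_coBeta_range_rowLen hi, filter_image,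
    card_image_of_injective _ coBeta_strictMono.injective, hcount] at hsplit
  rw [hrow, ← hsplit, add_comm]

variable (μ)

theorem card_filter_cells_eq_sum (P : ℕ × ℕ → Prop) [DecidablePred P] :
    #{c ∈ μ.cells | P c} = ∑ i ∈ range (μ.colLen 0), #{j ∈ range (μ.rowLen i) | P (i, j)} := by
  refine (card_eq_sum_card_fiberwise (f := Prod.fst) fun c hc => ?_).trans
    (sum_congr rfl fun i _ => ?_)
  · have hc := mem_iff_lt_colLen.mp ((mem_cells c).mp (mem_filter.mp hc).1)
    exact mem_range.mpr (hc.trans_le (μ.colLen_anti 0 c.2 c.2.zero_le))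
  · rw [← card_image_of_injective {j ∈ range (μ.rowLen i) | P (i, j)} (Prod.mk_right_injective i)]
    congr 1
    ext ⟨a, b⟩
    simp only [mem_filter, mem_cells, mem_image, mem_range, Prod.mk.injEq, mem_iff_lt_rowLen]
    constructor
    · rintro ⟨⟨hb, hP⟩, rfl⟩
      exact ⟨b, ⟨hb, hP⟩, rfl, rfl⟩
    · rintro ⟨j, ⟨hj, hP⟩, rfl, rfl⟩
      exact ⟨⟨hj, hP⟩, rfl⟩

theorem card_eq_sum_rowLen : μ.card = ∑ i ∈ range (μ.colLen 0), μ.rowLen i := by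
  simpa using μ.card_filter_cells_eq_sum fun _ => True

theorem hookCount_eq_sum_rows (t : ℕ) :
    hookCount t μ = ∑ i ∈ range (μ.colLen 0), #{j ∈ range (μ.rowLen i) | t ∣ μ.hookLength i j} :=
  μ.card_filter_cells_eq_sum fun c => t ∣ μ.hookLength c.1 c.2

theorem hookCount_add_sum_card_filter_beta_modEq {t : ℕ} (ht : 0 < t) :
    hookCount t μ + ∑ i ∈ range (μ.colLen 0),
        #{i' ∈ range (μ.colLen 0) | i < i' ∧ μ.beta i' ≡ μ.beta i [MOD t]}
      = ∑ i ∈ range (μ.colLen 0), μ.beta i / t := by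
  rw [hookCount_eq_sum_rows, ← sum_add_distrib]
  refine sum_congr rfl fun i hi => ?_
  rw [← card_filter_dvd_hookLength_add_card_filter_beta_modEq ht (mem_range.mp hi)]
  congr 2
  ext i'
  simp only [mem_filter, mem_range, mem_Ioo]
  tauto

theorem sum_beta_eq_card_add_sum_range :
    ∑ i ∈ range (μ.colLen 0), μ.beta i = μ.card + ∑ i ∈ range (μ.colLen 0), i := by
  rw [card_eq_sum_rowLen, ← sum_range_reflect (fun i => i), ← sum_add_distrib]
  rfl

theorem exists_three_mul_card_add_one_sub_nine_mul_hookCount_eq :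
    ∃ x y : ℤ, 3 * (μ.card : ℤ) + 1 - 9 * hookCount 3 μ = x ^ 2 + x * y + y ^ 2 := by
  have hmod : ∀ i ∈ range (μ.colLen 0), μ.beta i % 3 ∈ range 3 := fun i _ =>
    mem_range.mpr (Nat.mod_lt _ three_pos)
  have hcount := card_eq_sum_card_fiberwise hmod
  have hpairs := two_mul_sum_card_filter_lt_and_eq_add_card hmod
  have hresidues := sum_fiberwise_of_maps_to' hmod id
  simp only [sum_const, smul_eq_mul, id] at hresidues
  simp only [sum_range_succ, sum_range_zero, zero_add, card_range] at hcount hpairs hresidues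
  have hhook : hookCount 3 μ + ∑ i ∈ range (μ.colLen 0),
        #{i' ∈ range (μ.colLen 0) | i < i' ∧ μ.beta i' % 3 = μ.beta i % 3}
      = ∑ i ∈ range (μ.colLen 0), μ.beta i / 3 :=
    μ.hookCount_add_sum_card_filter_beta_modEq three_pos
  have hdiv : ∑ i ∈ range (μ.colLen 0), μ.beta i
      = 3 * ∑ i ∈ range (μ.colLen 0), μ.beta i / 3 + ∑ i ∈ range (μ.colLen 0), μ.beta i % 3 := by
    rw [mul_sum, ← sum_add_distrib]
    exact sum_congr rfl fun i _ => (Nat.div_add_mod _ 3).symm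
  have hgauss : 2 * ∑ i ∈ range (μ.colLen 0), i + μ.colLen 0 = μ.colLen 0 * μ.colLen 0 := by
    induction μ.colLen 0 with
    | zero => rfl
    | succ n ih => rw [sum_range_succ]; nlinarith
  have hbeta := μ.sum_beta_eq_card_add_sum_range
  set s := μ.colLen 0
  set a₀ := #{i ∈ range s | μ.beta i % 3 = 0}
  set a₁ := #{i ∈ range s | μ.beta i % 3 = 1}
  set a₂ := #{i ∈ range s | μ.beta i % 3 = 2}
  set P := ∑ i ∈ range s, #{i' ∈ range s | i < i' ∧ μ.beta i' % 3 = μ.beta i % 3}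
  set F := ∑ i ∈ range s, μ.beta i / 3
  set R := ∑ i ∈ range s, μ.beta i % 3
  set B := ∑ i ∈ range s, μ.beta i
  set G := ∑ i ∈ range s, i
  clear_value s a₀ a₁ a₂ P F R B G
  subst hcount
  refine ⟨2 * a₀ - a₁ - a₂ - 1, 2 * a₁ - a₀ - a₂, mul_left_cancel₀ two_ne_zero ?_⟩
  zify at hpairs hhook hresidues hdiv hgauss hbeta
  linear_combination (-18) * hhook + 6 * hdiv - 6 * hbeta - 3 * hgauss + 9 * hpairs - 6 * hresidues

end YoungDiagram

namespace ZMod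

variable {p : ℕ} [Fact p.Prime]

theorem eq_of_pow_three_eq_pow_three (hp : p % 3 = 2) {x y : ZMod p} (h : x ^ 3 = y ^ 3) :
    x = y := by
  -- `3 * (2 * (p / 3) + 1) = 2 * p - 1`, and `z ^ (2 * p - 1) = z` by Fermat.
  have cube_root : ∀ z : ZMod p, z = (z ^ 3) ^ (2 * (p / 3) + 1) := fun z => by
    have hexp : 3 * (2 * (p / 3) + 1) = p + (p - 1) := by omega
    rw [← pow_mul, hexp, pow_add, pow_card, ← pow_succ',
      Nat.sub_add_cancel (Fact.out : p.Prime).one_le, pow_card]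
  rw [cube_root x, cube_root y, h]

theorem eq_zero_of_sq_add_mul_add_sq_eq_zero (hp : p % 3 = 2) {x y : ZMod p}
    (h : x ^ 2 + x * y + y ^ 2 = 0) : x = 0 ∧ y = 0 := by
  have hxy : x = y := eq_of_pow_three_eq_pow_three hp (by linear_combination (x - y) * h)
  subst hxy
  have h3 : ((3 : ℕ) : ZMod p) ≠ 0 := by
    rw [Ne, ZMod.natCast_eq_zero_iff, Nat.dvd_prime Nat.prime_three]
    omega
  have hx : x ^ 2 = 0 := by
    have : ((3 : ℕ) : ZMod p) * x ^ 2 = 0 := by push_cast; linear_combination h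
    exact (mul_eq_zero.mp this).resolve_left h3
  exact ⟨pow_eq_zero_iff two_ne_zero |>.mp hx, pow_eq_zero_iff two_ne_zero |>.mp hx⟩

end ZMod

theorem Int.sq_dvd_of_dvd_sq_add_mul_add_sq {p : ℕ} (hp : p.Prime) (h3 : p % 3 = 2) {x y : ℤ}
    (h : (p : ℤ) ∣ x ^ 2 + x * y + y ^ 2) : (p : ℤ) ^ 2 ∣ x ^ 2 + x * y + y ^ 2 := by
  have := Fact.mk hp
  rw [← ZMod.intCast_zmod_eq_zero_iff_dvd] at h
  push_cast at h
  obtain ⟨hx, hy⟩ := ZMod.eq_zero_of_sq_add_mul_add_sq_eq_zero h3 h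
  obtain ⟨u, rfl⟩ := (ZMod.intCast_zmod_eq_zero_iff_dvd x p).mp hx
  obtain ⟨v, rfl⟩ := (ZMod.intCast_zmod_eq_zero_iff_dvd y p).mp hy
  exact ⟨u ^ 2 + u * v + v ^ 2, by ring⟩

theorem Nat.Partition.card_toYoung {n : ℕ} (p : n.Partition) : p.toYoung.card = n := by
  have hrowLens : p.toYoung.rowLens = p.parts.sort (· ≥ ·) :=
    YoungDiagram.rowLens_ofRowLens_eq_self fun _ hx => p.parts_pos ((Multiset.mem_sort _).mp hx)
  calc p.toYoung.card = p.toYoung.rowLens.sum := p.toYoung.card_eq_sum_rowLen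
    _ = p.parts.sum := by rw [hrowLens, ← Multiset.sum_coe, Multiset.sort_eq]
    _ = n := p.parts_sum

theorem vanishing_three_hooks_general (ℓ : ℕ) (hp : ℓ.Prime) (h2 : ℓ % 3 = 2)
    (a₁ a₂ : ℕ)
    (hord₁ : (ℓ : ℤ) ∣ (-9 * a₁ + 3 * a₂ + 1))
    (hord₂ : ¬ ((ℓ : ℤ) ^ 2 ∣ (-9 * a₁ + 3 * a₂ + 1))) (n : ℕ) :
    hookP 3 a₁ (ℓ ^ 2) (ℓ ^ 2 * n + a₂) = 0 := by
  rw [hookP, Fintype.card_eq_zero_iff]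
  refine ⟨fun ⟨q, hq⟩ => hord₂ ?_⟩
  obtain ⟨x, y, hxy⟩ := q.toYoung.exists_three_mul_card_add_one_sub_nine_mul_hookCount_eq
  rw [q.card_toYoung] at hxy
  have hhook : (hookCount 3 q.toYoung : ℤ) ≡ a₁ [ZMOD ℓ ^ 2] :=
    mod_cast Int.natCast_modEq_iff.mpr hq
  have hcong : x ^ 2 + x * y + y ^ 2 ≡ -9 * a₁ + 3 * a₂ + 1 [ZMOD ℓ ^ 2] :=
    calc x ^ 2 + x * y + y ^ 2 = 3 * ((ℓ : ℤ) ^ 2 * n + a₂) + 1 - 9 * hookCount 3 q.toYoung := by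
          rw [← hxy]; push_cast; ring
      _ ≡ 3 * (0 + a₂) + 1 - 9 * a₁ [ZMOD ℓ ^ 2] := by
          gcongr
          exact (dvd_mul_right _ _).modEq_zero_int
      _ = -9 * a₁ + 3 * a₂ + 1 := by ring
  have hdvd := (hcong.of_dvd (dvd_pow_self (ℓ : ℤ) two_ne_zero)).dvd_iff.mpr hord₁
  exact hcong.dvd_iff.mp (Int.sq_dvd_of_dvd_sq_add_mul_add_sq hp h2 hdvd)

theorem vanishing_three_hooks (ℓ : ℕ) (hp : ℓ.Prime) (h2 : ℓ % 3 = 2)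
    (a₁ a₂ : ℕ) (h₁ : a₁ < ℓ ^ 2) (h₂ : a₂ < ℓ ^ 2)
    (hord₁ : (ℓ : ℤ) ∣ (-9 * a₁ + 3 * a₂ + 1))
    (hord₂ : ¬ ((ℓ : ℤ) ^ 2 ∣ (-9 * a₁ + 3 * a₂ + 1))) (n : ℕ) :
    hookP 3 a₁ (ℓ ^ 2) (ℓ ^ 2 * n + a₂) = 0 :=
  vanishing_three_hooks_general ℓ hp h2 a₁ a₂ hord₁ hord₂ n
end

section
/- Let b ∈ ℕ, b ≥ 2, and ξ = e^{2πi/b}. Then ∑_{j=1}^{b} ψ(j/b) ξ^j = b · Log(1 - ξ), where ψ = Γ'/Γ is the digamma function and Log is the principal branch of the logarithm. -/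
/-!
Convexity of `log Γ` squeezes `ψ (x + N)` between `ψ N` and `ψ (N + 1)`, which gives
`ψ x + γ = lim (H_N - ∑_{k<N} 1 / (x + k))` for `0 < x ≤ 1`. Put `x = j / b` and weight by `ξ ^ j`:
since `ξ ^ b = 1`, the double sum `∑_j ∑_k ξ ^ j / (j / b + k)` is `b ∑_{m ≤ bN} ξ ^ m / m`, and the
terms that do not depend on `j` cancel because `∑_j ξ ^ j = 0`. The series `∑ ξ ^ m / m` converges by
Dirichlet's test, and Abel's limit theorem identifies its sum with `-Log (1 - ξ)`.
-/

open Complex Real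

/-- The digamma function `ψ = Γ'/Γ` on the reals. -/
noncomputable def digamma (x : ℝ) : ℝ := deriv Real.Gamma x / Real.Gamma x

open Filter Topology Finset

local notation "γ" => Real.eulerMascheroniConstant

lemma differentiableAt_log_Gamma {x : ℝ} (hx : 0 < x) :
    DifferentiableAt ℝ (Real.log ∘ Real.Gamma) x :=
  (Real.differentiableOn_Gamma_Ioi.differentiableAt (Ioi_mem_nhds hx)).log
    (Real.Gamma_pos_of_pos hx).ne'

lemma deriv_log_Gamma {x : ℝ} (hx : 0 < x) :
    deriv (Real.log ∘ Real.Gamma) x = _root_.digamma x := by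
  rw [Function.comp_def, deriv.log (Real.differentiableOn_Gamma_Ioi.differentiableAt
    (Ioi_mem_nhds hx)) (Real.Gamma_pos_of_pos hx).ne', _root_.digamma]

lemma digamma_monotoneOn : MonotoneOn _root_.digamma (Set.Ioi 0) :=
  (Real.convexOn_log_Gamma.monotoneOn_deriv fun _ hx ↦ differentiableAt_log_Gamma hx).congr
    fun _ hx ↦ deriv_log_Gamma hx

lemma digamma_add_one {x : ℝ} (hx : 0 < x) :
    _root_.digamma (x + 1) = _root_.digamma x + 1 / x := by
  have hrec : Real.log ∘ Real.Gamma ∘ (· + 1) =ᶠ[𝓝 x] Real.log ∘ Real.Gamma + Real.log := by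
    filter_upwards [eventually_gt_nhds hx] with y hy
    simp [Real.Gamma_add_one hy.ne', Real.log_mul hy.ne' (Real.Gamma_pos_of_pos hy).ne', add_comm]
  rw [← deriv_log_Gamma hx, ← deriv_log_Gamma (by positivity), one_div, ← Real.deriv_log,
    ← deriv_add (differentiableAt_log_Gamma hx) (Real.differentiableAt_log hx.ne'),
    ← hrec.deriv_eq, ← deriv_comp_add_const]
  rfl

lemma digamma_add_nat {x : ℝ} (hx : 0 < x) (N : ℕ) :
    _root_.digamma (x + N) = _root_.digamma x + ∑ k ∈ range N, 1 / (x + k) := by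
  induction N with
  | zero => simp
  | succ N ih =>
    rw [Nat.cast_succ, ← add_assoc, digamma_add_one (by positivity), ih, sum_range_succ, add_assoc]

lemma digamma_natCast_add_one (n : ℕ) : _root_.digamma (n + 1) = -γ + harmonic n := by
  rw [_root_.digamma, Real.deriv_Gamma_nat, Real.Gamma_nat_eq_factorial,
    mul_div_cancel_left₀ _ (by positivity)]

theorem tendsto_harmonic_sub_sum_inv_add {x : ℝ} (hx0 : 0 < x) (hx1 : x ≤ 1) :
    Tendsto (fun N : ℕ ↦ (harmonic N : ℝ) - ∑ k ∈ range N, 1 / (x + k)) atTop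
      (𝓝 (_root_.digamma x + γ)) := by
  have lower (N : ℕ) : _root_.digamma x + γ ≤ harmonic N - ∑ k ∈ range N, 1 / (x + k) := by
    have := digamma_monotoneOn (a := x + N) (b := N + 1) (by simp; positivity)
      (by simp; positivity) (by linarith)
    rw [digamma_add_nat hx0, digamma_natCast_add_one] at this
    linarith
  have upper (N : ℕ) : harmonic (N + 1) - ∑ k ∈ range (N + 1), 1 / (x + k)
      ≤ _root_.digamma x + γ + 1 / (N + 1) := by
    have := digamma_monotoneOn (a := N + 1) (b := x + (N + 1 : ℕ)) (by simp; positivity)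
      (by simp; positivity) (by push_cast; linarith)
    rw [digamma_add_nat hx0, digamma_natCast_add_one] at this
    rw [harmonic_succ]
    push_cast
    rw [← one_div]
    linarith
  rw [← tendsto_add_atTop_iff_nat 1]
  refine tendsto_of_tendsto_of_tendsto_of_le_of_le tendsto_const_nhds ?_ (fun N ↦ lower (N + 1))
    upper
  simpa using (tendsto_const_nhds (x := _root_.digamma x + γ)).add
    tendsto_one_div_add_atTop_nhds_zero_nat

lemma Complex.one_sub_mem_slitPlane_of_norm_eq_one {ξ : ℂ} (hξ : ‖ξ‖ = 1) (h1 : ξ ≠ 1) :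
    1 - ξ ∈ slitPlane := by
  rw [mem_slitPlane_iff, sub_re, one_re, sub_pos]
  refine Or.inl <| ((re_le_norm ξ).trans_eq hξ).lt_of_ne fun hre ↦ h1 ?_
  exact Complex.ext hre <| not_not.1 fun him ↦
    (abs_re_lt_norm.2 him).ne (by rw [hre, hξ, abs_one])

lemma Complex.norm_sum_range_pow_succ_le {ξ : ℂ} (hξ : ‖ξ‖ = 1) (h1 : ξ ≠ 1) (n : ℕ) :
    ‖∑ i ∈ range n, ξ ^ (i + 1)‖ ≤ 2 / ‖ξ - 1‖ := by
  simp_rw [pow_succ]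
  rw [← sum_mul, geom_sum_eq h1, norm_mul, hξ, mul_one, norm_div]
  gcongr
  calc ‖ξ ^ n - 1‖ ≤ ‖ξ ^ n‖ + ‖(1 : ℂ)‖ := norm_sub_le _ _
    _ = 2 := by rw [norm_pow, hξ]; norm_num

lemma Complex.cauchySeq_sum_range_pow_succ_div {ξ : ℂ} (hξ : ‖ξ‖ = 1) (h1 : ξ ≠ 1) :
    CauchySeq fun n ↦ ∑ m ∈ range n, ξ ^ (m + 1) / (m + 1) := by
  have hanti : Antitone fun m : ℕ ↦ 1 / ((m : ℝ) + 1) := fun a b hab ↦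
    one_div_le_one_div_of_le (by positivity) (by gcongr)
  convert hanti.cauchySeq_series_mul_of_tendsto_zero_of_bounded
    tendsto_one_div_add_atTop_nhds_zero_nat (norm_sum_range_pow_succ_le hξ h1) using 3 with n m
  rw [Complex.real_smul]
  push_cast
  ring

theorem Complex.tendsto_sum_range_pow_succ_div {ξ : ℂ} (hξ : ‖ξ‖ = 1) (h1 : ξ ≠ 1) :
    Tendsto (fun n ↦ ∑ m ∈ range n, ξ ^ (m + 1) / (m + 1)) atTop (𝓝 (-log (1 - ξ))) := by
  obtain ⟨l, hl⟩ := cauchySeq_tendsto_of_complete (cauchySeq_sum_range_pow_succ_div hξ h1)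
  have hl' : Tendsto (fun n ↦ ∑ m ∈ range n, ξ ^ m / m) atTop (𝓝 l) := by
    rw [← tendsto_add_atTop_iff_nat 1]
    simpa [sum_range_succ'] using hl
  have habel := tendsto_map'_iff.1 (tendsto_tsum_powerSeries_nhdsWithin_lt hl')
  have hdisc : ∀ᶠ x : ℝ in 𝓝[<] 1, ∑' m : ℕ, ξ ^ m / m * (x : ℂ) ^ m = -log (1 - x * ξ) := by
    filter_upwards [Ioo_mem_nhdsLT (show (-1 : ℝ) < 1 by norm_num)] with x hx
    have hxξ : ‖(x : ℂ) * ξ‖ < 1 := by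
      rwa [norm_mul, hξ, mul_one, norm_real, Real.norm_eq_abs, abs_lt]
    rw [← (hasSum_taylorSeries_neg_log hxξ).tsum_eq]
    exact tsum_congr fun m ↦ by ring
  have hcont : ContinuousAt (fun x : ℝ ↦ -log (1 - x * ξ)) 1 := by
    refine (ContinuousAt.comp (g := log) ?_ (by fun_prop)).neg
    exact continuousAt_clog (by simpa using one_sub_mem_slitPlane_of_norm_eq_one hξ h1)
  have hlim : Tendsto (fun x : ℝ ↦ -log (1 - x * ξ)) (𝓝[<] 1) (𝓝 (-log (1 - ξ))) := by
    simpa using hcont.continuousWithinAt.tendsto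
  rwa [tendsto_nhds_unique (habel.congr' hdisc) hlim] at hl

lemma Finset.sum_Icc_one_eq_sum_range {M : Type*} [AddCommMonoid M] (f : ℕ → M) (n : ℕ) :
    ∑ j ∈ Icc 1 n, f j = ∑ r ∈ range n, f (r + 1) := by
  rw [range_eq_Ico, sum_Ico_add', zero_add, Ico_add_one_right_eq_Icc]

lemma Finset.sum_range_mul {M : Type*} [AddCommMonoid M] (f : ℕ → M) (b N : ℕ) :
    ∑ m ∈ range (b * N), f m = ∑ k ∈ range N, ∑ r ∈ range b, f (b * k + r) := by
  induction N with
  | zero => simp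
  | succ N ih => rw [mul_add_one, sum_range_add, ih, sum_range_succ]

lemma sum_Icc_one_pow_eq_zero {R : Type*} [DivisionRing R] {ξ : R} {b : ℕ} (hξb : ξ ^ b = 1)
    (hξ1 : ξ ≠ 1) : ∑ j ∈ Icc 1 b, ξ ^ j = 0 := by
  simp_rw [sum_Icc_one_eq_sum_range, pow_succ]
  rw [← sum_mul, geom_sum_eq hξ1, hξb, sub_self, zero_div, zero_mul]

/-- Reindex by `m = j + b k`, using `ξ ^ m = ξ ^ j`. -/
lemma sum_Icc_sum_inv_add_mul_pow {b : ℕ} {ξ : ℂ} (hξb : ξ ^ b = 1) (hb : b ≠ 0) (N : ℕ) :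
    ∑ j ∈ Icc 1 b, ((∑ k ∈ range N, 1 / ((j : ℝ) / b + k) : ℝ) : ℂ) * ξ ^ j
      = b * ∑ m ∈ range (b * N), ξ ^ (m + 1) / (m + 1) := by
  simp_rw [sum_Icc_one_eq_sum_range, sum_range_mul, ofReal_sum, sum_mul, mul_sum]
  rw [sum_comm]
  refine sum_congr rfl fun k _ ↦ sum_congr rfl fun r _ ↦ ?_
  rw [add_assoc, pow_add ξ (b * k), pow_mul, hξb, one_pow, one_mul]
  push_cast
  field_simp
  ring

theorem sum_Icc_digamma_mul_pow_of_pow_eq_one {b : ℕ} {ξ : ℂ} (hξb : ξ ^ b = 1) (hξ1 : ξ ≠ 1) :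
    ∑ j ∈ Icc 1 b, (_root_.digamma (j / b) : ℂ) * ξ ^ j = b * Complex.log (1 - ξ) := by
  rcases Nat.eq_zero_or_pos b with rfl | hb
  · simp
  have hsum := sum_Icc_one_pow_eq_zero hξb hξ1
  set a : ℕ → ℂ := fun N ↦ ∑ j ∈ Icc 1 b,
    ((harmonic N - ∑ k ∈ range N, 1 / ((j : ℝ) / b + k) : ℝ) : ℂ) * ξ ^ j
  have ha_digamma : Tendsto a atTop
      (𝓝 (∑ j ∈ Icc 1 b, ((_root_.digamma (j / b) + γ : ℝ) : ℂ) * ξ ^ j)) := by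
    refine tendsto_finsetSum _ fun j hj ↦ ?_
    have hj := mem_Icc.1 hj
    have hx0 : (0 : ℝ) < j / b := by have : 0 < j := hj.1; positivity
    have hx1 : (j : ℝ) / b ≤ 1 := div_le_one_of_le₀ (mod_cast hj.2) b.cast_nonneg
    exact ((continuous_ofReal.tendsto _).comp
      (tendsto_harmonic_sub_sum_inv_add hx0 hx1)).mul_const _
  have ha_log : Tendsto a atTop (𝓝 (b * log (1 - ξ))) := by
    have ha : a = fun N ↦ -b * ∑ m ∈ range (b * N), ξ ^ (m + 1) / (m + 1) := by
      ext N
      simp only [a, ofReal_sub, sub_mul, sum_sub_distrib, ← mul_sum, hsum, mul_zero, zero_sub,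
        sum_Icc_sum_inv_add_mul_pow hξb hb.ne', neg_mul]
    have hbN : Tendsto (fun N ↦ b * N) atTop atTop := tendsto_id.const_mul_atTop' hb
    simpa [ha] using ((tendsto_sum_range_pow_succ_div
      (norm_eq_one_of_pow_eq_one hξb hb.ne') hξ1).comp hbN).const_mul (-(b : ℂ))
  calc ∑ j ∈ Icc 1 b, (_root_.digamma (j / b) : ℂ) * ξ ^ j
      = ∑ j ∈ Icc 1 b, ((_root_.digamma (j / b) + γ : ℝ) : ℂ) * ξ ^ j
        - γ * ∑ j ∈ Icc 1 b, ξ ^ j := by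
        rw [mul_sum, ← sum_sub_distrib]
        exact sum_congr rfl fun j _ ↦ by push_cast; ring
    _ = b * log (1 - ξ) := by rw [tendsto_nhds_unique ha_digamma ha_log, hsum, mul_zero, sub_zero]

/-- `∑_{j=1}^{b} ψ(j/b) ξ^j = b · Log(1-ξ)` for `ξ = e^{2πi/b}`. -/
theorem digamma_root_of_unity_sum (b : ℕ) (hb : 2 ≤ b) :
    ∑ j ∈ Finset.Icc 1 b, (_root_.digamma (j / b) : ℂ) * Complex.exp (2 * π * I / b) ^ j
      = b * Complex.log (1 - Complex.exp (2 * π * I / b)) := by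
  have hξ := isPrimitiveRoot_exp b (by omega)
  exact sum_Icc_digamma_mul_pow_of_pow_eq_one hξ.pow_eq_one (hξ.ne_one hb)
end

section
/- For any N ∈ ℝ with N > 0, ∫₀^∞ ( e^{-x}/(x(1-e^{-Nx})) - 1/(Nx²) + (1/N - 1/2)·e^{-x}/x ) dx = log Γ(1/N) + (1/2 - 1/N) log(1/N) - (1/2) log(2π). -/
/-!
With Binet's kernel `β(t) = 1/(eᵗ - 1) - 1/t + 1/2`, the integrand equals
`β(N x) e⁻ˣ / x - N⁻¹ (1 - (1 + x) e⁻ˣ) / x²`. The second term is `N⁻¹` times the derivative of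
`(1 - e⁻ˣ) / x`, which falls from `1` to `0`, and the substitution `t = N x` turns the first into
Binet's integral `J(1/N)`, where `J(z) = ∫₀^∞ β(t) e^{-zt} / t dt`. What remains is Binet's first
formula `J(z) = log Γ(z) - (z - 1/2) log z + z - log(2π)/2`. Both sides satisfy
`f(z) - f(z + 1) = (z + 1/2) log(1 + 1/z) - 1` (for `J` by Frullani's integral, for the right side
by `Γ(z + 1) = z Γ(z)`), and both tend to `0` along `z + n`: `J` because `0 ≤ β(t) ≤ t`, the right
side by Stirling's formula for `n!` together with the log-convexity of `Γ`.
-/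

open Real Set Filter Topology MeasureTheory

noncomputable def binetKernel (t : ℝ) : ℝ := 1 / (exp t - 1) - 1 / t + 1 / 2

noncomputable def binetIntegral (z : ℝ) : ℝ := ∫ t in Ioi 0, binetKernel t * exp (-z * t) / t

section BinetKernel

variable {t z : ℝ}

lemma two_sub_mul_exp_le_two_add (ht : 0 ≤ t) : (2 - t) * exp t ≤ 2 + t := by
  have hmono : Monotone fun u => (u - 2) * exp u + u := by
    refine monotone_of_hasDerivAt_nonneg (f' := fun u => (u - 1) * exp u + 1)
      (fun u => ?_) (fun u => ?_)
    · exact ((((hasDerivAt_id u).sub_const 2).mul (hasDerivAt_exp u)).add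
        (hasDerivAt_id u)).congr_deriv (by simp only [id]; ring)
    · show 0 ≤ (u - 1) * exp u + 1
      have hexp : exp (-u) * exp u = 1 := by rw [← exp_add, neg_add_cancel, exp_zero]
      nlinarith [add_one_le_exp (-u), exp_pos u]
  have h := hmono ht
  simp only [zero_sub, exp_zero, mul_one, add_zero] at h
  linarith

lemma binetKernel_eq (ht : 0 < t) :
    binetKernel t = ((t - 2) * (exp t - 1) + 2 * t) / (2 * t * (exp t - 1)) := by
  have : 0 < exp t - 1 := by simpa using ht
  rw [binetKernel]
  field_simp
  ring

lemma binetKernel_nonneg (ht : 0 < t) : 0 ≤ binetKernel t := by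
  have : 0 < exp t - 1 := by simpa using ht
  rw [binetKernel_eq ht]
  exact div_nonneg (by nlinarith [two_sub_mul_exp_le_two_add ht.le]) (by positivity)

lemma binetKernel_le_self (ht : 0 < t) : binetKernel t ≤ t := by
  have hE : t + t ^ 2 / 2 ≤ exp t - 1 := by linarith [quadratic_le_exp_of_nonneg ht.le]
  have : 0 < exp t - 1 := by simpa using ht
  rw [binetKernel_eq ht, div_le_iff₀ (by positivity)]
  nlinarith [mul_le_mul_of_nonneg_left hE (by nlinarith : 0 ≤ 2 * t ^ 2 - t + 2)]

@[fun_prop]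
lemma measurable_binetKernel : Measurable binetKernel := by
  unfold binetKernel
  fun_prop

lemma norm_binetKernel_mul_exp_div_le (ht : 0 < t) :
    ‖binetKernel t * exp (-z * t) / t‖ ≤ exp (-z * t) := by
  have := binetKernel_nonneg ht
  rw [norm_of_nonneg (by positivity), div_le_iff₀ ht]
  nlinarith [binetKernel_le_self ht, exp_pos (-z * t)]

lemma integrableOn_binetKernel_mul_exp_div (hz : 0 < z) :
    IntegrableOn (fun t => binetKernel t * exp (-z * t) / t) (Ioi 0) :=
  (exp_neg_integrableOn_Ioi 0 hz).mono' (by fun_prop : Measurable _).aestronglyMeasurable <|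
    (ae_restrict_mem measurableSet_Ioi).mono fun _ ht => norm_binetKernel_mul_exp_div_le ht

lemma norm_binetIntegral_le (hz : 0 < z) : ‖binetIntegral z‖ ≤ z⁻¹ := by
  calc ‖binetIntegral z‖ ≤ ∫ t in Ioi 0, exp (-z * t) :=
        norm_integral_le_of_norm_le (exp_neg_integrableOn_Ioi 0 hz) <|
          (ae_restrict_mem measurableSet_Ioi).mono fun _ ht => norm_binetKernel_mul_exp_div_le ht
    _ = z⁻¹ := by
        rw [integral_exp_mul_Ioi (by linarith) 0]
        simp

lemma tendsto_binetIntegral_atTop : Tendsto binetIntegral atTop (𝓝 0) := by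
  refine squeeze_zero_norm' ?_ tendsto_inv_atTop_zero
  filter_upwards [eventually_gt_atTop 0] with z hz using norm_binetIntegral_le hz

end BinetKernel

/-- `e^{-zt} (1 - e^{-t}) / t`, written with `dslope` so that it is continuous at `t = 0`
(with value `1`), as the fundamental theorem of calculus on `(0, ∞)` requires. -/
noncomputable def expSlope (z t : ℝ) : ℝ := exp (-z * t) * dslope (fun u => 1 - exp (-u)) 0 t

section ExpSlope

variable {t z : ℝ}

lemma expSlope_of_ne (z : ℝ) (ht : t ≠ 0) :
    expSlope z t = exp (-z * t) * (1 - exp (-t)) / t := by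
  rw [expSlope, dslope_of_ne _ ht, slope_def_field]
  simp [mul_div_assoc]

lemma expSlope_zero_right (z : ℝ) : expSlope z 0 = 1 := by
  have : HasDerivAt (fun u : ℝ => 1 - exp (-u)) 1 0 := by
    simpa using ((hasDerivAt_neg (0 : ℝ)).exp).const_sub 1
  simp [expSlope, dslope_same, this.deriv]

lemma continuousAt_expSlope_zero (z : ℝ) : ContinuousAt (expSlope z) 0 := by
  refine (by fun_prop : Continuous fun t => exp (-z * t)).continuousAt.mul
    (continuousAt_dslope_same.2 ?_)
  fun_prop

lemma hasDerivAt_expSlope (z : ℝ) (ht : t ≠ 0) :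
    HasDerivAt (expSlope z)
      (-(exp (-z * t) * (z * (1 - exp (-t)) / t + (1 - (1 + t) * exp (-t)) / t ^ 2))) t := by
  have hE : HasDerivAt (fun u => exp (-z * u)) (-z * exp (-z * t)) t := by
    simpa [mul_comm] using ((hasDerivAt_id t).const_mul (-z)).exp
  have hS : HasDerivAt (fun u => 1 - exp (-u)) (exp (-t)) t := by
    simpa using ((hasDerivAt_neg t).exp).const_sub 1
  refine ((hE.mul hS).div (hasDerivAt_id t) ht).congr_of_eventuallyEq ?_ |>.congr_deriv ?_
  · filter_upwards [eventually_ne_nhds ht] with u hu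
    rw [expSlope_of_ne z hu]
    rfl
  · simp only [Pi.mul_apply, id]
    field_simp
    ring

lemma tendsto_expSlope_atTop (z : ℝ) (hz : 0 ≤ z) : Tendsto (expSlope z) atTop (𝓝 0) := by
  refine squeeze_zero' ?_ ?_ tendsto_inv_atTop_zero
  all_goals filter_upwards [eventually_gt_atTop 0] with t ht
  all_goals rw [expSlope_of_ne z ht.ne']
  all_goals have h1 : 0 ≤ 1 - exp (-t) := by simpa using ht.le
  · positivity
  · have h2 : exp (-z * t) ≤ 1 := exp_le_one_iff.2 (by nlinarith)
    rw [div_le_iff₀ ht, inv_mul_cancel₀ ht.ne']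
    nlinarith [exp_pos (-t), exp_pos (-z * t)]

lemma neg_deriv_expSlope_nonneg (hz : 0 ≤ z) (ht : 0 < t) :
    0 ≤ exp (-z * t) * (z * (1 - exp (-t)) / t + (1 - (1 + t) * exp (-t)) / t ^ 2) := by
  have h1 : 0 ≤ 1 - exp (-t) := by simpa using ht.le
  have h2 : 0 ≤ 1 - (1 + t) * exp (-t) := by
    have hexp : exp t * exp (-t) = 1 := by rw [← exp_add, add_neg_cancel, exp_zero]
    nlinarith [add_one_le_exp t, exp_pos (-t)]
  positivity

lemma integrableOn_neg_deriv_expSlope (hz : 0 ≤ z) :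
    IntegrableOn
      (fun t => exp (-z * t) * (z * (1 - exp (-t)) / t + (1 - (1 + t) * exp (-t)) / t ^ 2))
      (Ioi 0) := by
  refine (integrableOn_Ioi_deriv_of_nonpos (continuousAt_expSlope_zero z).continuousWithinAt
    (fun t ht => hasDerivAt_expSlope z (ne_of_gt ht))
    (fun t ht => neg_nonpos.2 (neg_deriv_expSlope_nonneg hz ht))
    (tendsto_expSlope_atTop z hz)).neg.congr_fun (fun t _ => neg_neg _) measurableSet_Ioi

lemma integral_neg_deriv_expSlope (hz : 0 ≤ z) :
    ∫ t in Ioi 0, exp (-z * t) * (z * (1 - exp (-t)) / t + (1 - (1 + t) * exp (-t)) / t ^ 2)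
      = 1 := by
  have := integral_Ioi_of_hasDerivAt_of_nonpos (continuousAt_expSlope_zero z).continuousWithinAt
    (fun t ht => hasDerivAt_expSlope z (ne_of_gt ht))
    (fun t ht => neg_nonpos.2 (neg_deriv_expSlope_nonneg hz ht))
    (tendsto_expSlope_atTop z hz)
  rw [integral_neg, expSlope_zero_right] at this
  linarith

end ExpSlope

section Frullani

variable {t z : ℝ}

lemma exp_neg_add_mul (z t : ℝ) : exp (-(z + 1) * t) = exp (-z * t) * exp (-t) := by
  rw [← exp_add]; ring_nf

lemma integrableOn_exp_neg_mul_one_sub_exp_neg_div (hz : 0 < z) :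
    IntegrableOn (fun t => exp (-z * t) * (1 - exp (-t)) / t) (Ioi 0) := by
  refine (exp_neg_integrableOn_Ioi 0 hz).mono' (by fun_prop : Measurable _).aestronglyMeasurable
    ((ae_restrict_mem measurableSet_Ioi).mono fun t (ht : 0 < t) => ?_)
  have h1 : 0 ≤ 1 - exp (-t) := by simpa using ht.le
  have h2 : 1 - exp (-t) ≤ t := by linarith [add_one_le_exp (-t)]
  rw [norm_of_nonneg (by positivity), div_le_iff₀ ht]
  nlinarith [exp_pos (-z * t)]

lemma integral_exp_neg_mul_one_sub_exp_neg_div (hz : 0 < z) :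
    ∫ t in Ioi 0, exp (-z * t) * (1 - exp (-t)) / t = log ((z + 1) / z) := by
  have hpointwise : ∀ t ∈ Ioi (0 : ℝ), exp (-z * t) * (1 - exp (-t)) / t
      = t⁻¹ • (exp (-(z * t)) - exp (-((z + 1) * t))) := by
    intro t _
    rw [smul_eq_mul, ← neg_mul, ← neg_mul, exp_neg_add_mul]
    ring
  have hcont : Continuous fun u : ℝ => exp (-u) := by fun_prop
  rw [setIntegral_congr_fun measurableSet_Ioi hpointwise,
    Frullani.integral_Ioi_eq (L := 1) (R := 0) (hcont.locallyIntegrable.locallyIntegrableOn _) hz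
      (by linarith) ?_ tendsto_exp_neg_atTop_nhds_zero
      ((integrableOn_exp_neg_mul_one_sub_exp_neg_div hz).congr_fun hpointwise measurableSet_Ioi)]
  · simp
  · simpa using hcont.continuousWithinAt.tendsto (x := 0) (s := Ioi 0)

end Frullani

noncomputable def stirlingRemainder (z : ℝ) : ℝ :=
  log (Gamma z) - ((z - 1 / 2) * log z - z + log (2 * π) / 2)

section StirlingRemainder

variable {x z : ℝ}

lemma stirlingRemainder_sub_stirlingRemainder_add_one (hz : 0 < z) :
    stirlingRemainder z - stirlingRemainder (z + 1) = (z + 1 / 2) * log ((z + 1) / z) - 1 := by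
  rw [stirlingRemainder, stirlingRemainder, Gamma_add_one hz.ne',
    log_mul hz.ne' (Gamma_pos_of_pos hz).ne', log_div (by linarith) hz.ne']
  ring

lemma stirlingRemainder_natCast {n : ℕ} (hn : n ≠ 0) :
    stirlingRemainder n = log (Stirling.stirlingSeq n) - log √π := by
  obtain ⟨m, rfl⟩ := Nat.exists_eq_add_one_of_ne_zero hn
  have hm : (0 : ℝ) < m + 1 := by positivity
  rw [stirlingRemainder, Stirling.log_stirlingSeq_formula, Nat.factorial_succ]
  push_cast
  rw [Gamma_nat_eq_factorial, log_mul hm.ne' (by positivity),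
    log_div hm.ne' (exp_pos 1).ne', log_exp, log_mul two_ne_zero hm.ne',
    log_mul two_ne_zero pi_pos.ne', log_sqrt pi_pos.le]
  ring

lemma tendsto_stirlingRemainder_natCast :
    Tendsto (fun n : ℕ => stirlingRemainder n) atTop (𝓝 0) := by
  have h := ((continuousAt_log (by positivity : √π ≠ 0)).tendsto.comp
    Stirling.tendsto_stirlingSeq_sqrt_pi).sub_const (log √π)
  rw [sub_self] at h
  refine h.congr' ?_
  filter_upwards [eventually_ne_atTop 0] with n hn using (stirlingRemainder_natCast hn).symm

lemma tendsto_natCast_add_sub_half_mul_log_div :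
    Tendsto (fun n : ℕ => (n + x - 1 / 2) * log ((n + x) / n)) atTop (𝓝 x) := by
  have hlog : Tendsto (fun n : ℕ => log (1 + x / n)) atTop (𝓝 0) := by
    have h1 : Tendsto (fun n : ℕ => 1 + x / n) atTop (𝓝 1) := by
      simpa using ((tendsto_const_nhds (x := x)).div_atTop tendsto_natCast_atTop_atTop).const_add 1
    simpa [Function.comp_def] using (continuousAt_log one_ne_zero).tendsto.comp h1
  have h := ((tendsto_mul_log_one_add_div_atTop x).comp tendsto_natCast_atTop_atTop).add
    (hlog.const_mul (x - 1 / 2))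
  rw [mul_zero, add_zero] at h
  refine h.congr' ?_
  filter_upwards [eventually_ne_atTop 0] with n hn
  have : ((n : ℝ) + x) / n = 1 + x / n := by field_simp
  simp only [Function.comp_apply, this]
  ring

lemma log_Gamma_add_one (hz : 0 < z) : log (Gamma (z + 1)) = log (Gamma z) + log z := by
  rw [Gamma_add_one hz.ne', log_mul hz.ne' (Gamma_pos_of_pos hz).ne', add_comm]

lemma tendsto_log_Gamma_natCast_add_sub (hx0 : 0 < x) (hx1 : x ≤ 1) :
    Tendsto (fun n : ℕ => log (Gamma (n + x)) - log (Gamma n) - x * log n) atTop (𝓝 0) := by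
  have hconv := convexOn_log_Gamma
  have hfeq : ∀ {y : ℝ}, 0 < y → (log ∘ Gamma) (y + 1) = (log ∘ Gamma) y + log y :=
    log_Gamma_add_one
  rw [← tendsto_add_atTop_iff_nat 1]
  have hlower := (tendsto_log_nat_add_one_sub_log.const_mul x).neg
  rw [mul_zero, neg_zero] at hlower
  refine tendsto_of_tendsto_of_tendsto_of_le_of_le' hlower tendsto_const_nhds ?_ ?_
  · filter_upwards [eventually_ge_atTop 1] with n hn
    have := BohrMollerup.f_add_nat_ge hconv hfeq (by omega : 2 ≤ n + 1) hx0
    push_cast at this ⊢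
    simp only [Function.comp_apply, add_sub_cancel_right] at this
    linarith
  · filter_upwards with n
    have := BohrMollerup.f_add_nat_le hconv hfeq (Nat.succ_ne_zero n) hx0 hx1
    simp only [Function.comp_apply] at this
    linarith

lemma stirlingRemainder_natCast_add {n : ℕ} (hn : n ≠ 0) (hx : 0 ≤ x) :
    stirlingRemainder (n + x) = stirlingRemainder n
      + (log (Gamma (n + x)) - log (Gamma n) - x * log n)
      - (n + x - 1 / 2) * log ((n + x) / n) + x := by
  have hn' : (0 : ℝ) < n := by positivity
  rw [stirlingRemainder, stirlingRemainder, log_div (by positivity) hn'.ne']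
  ring

lemma tendsto_stirlingRemainder_natCast_add (hx0 : 0 < x) (hx1 : x ≤ 1) :
    Tendsto (fun n : ℕ => stirlingRemainder (n + x)) atTop (𝓝 0) := by
  have h := ((tendsto_stirlingRemainder_natCast.add (tendsto_log_Gamma_natCast_add_sub hx0 hx1)).sub
    (tendsto_natCast_add_sub_half_mul_log_div (x := x))).add_const x
  rw [add_zero, zero_sub, neg_add_cancel] at h
  refine h.congr' ?_
  filter_upwards [eventually_ne_atTop 0] with n hn using
    (stirlingRemainder_natCast_add hn hx0.le).symm

lemma tendsto_stirlingRemainder_add_natCast (hz : 0 < z) :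
    Tendsto (fun n : ℕ => stirlingRemainder (z + n)) atTop (𝓝 0) := by
  set k := ⌈z⌉₊ - 1
  have hk : (k : ℝ) = ⌈z⌉₊ - 1 := by
    rw [Nat.cast_sub (Nat.one_le_iff_ne_zero.2 (Nat.ceil_pos.2 hz).ne'), Nat.cast_one]
  have h := (tendsto_stirlingRemainder_natCast_add (x := z - k)
    (by linarith [Nat.ceil_lt_add_one hz.le]) (by linarith [Nat.le_ceil z])).comp
    (tendsto_add_atTop_nat k)
  refine h.congr fun n => ?_
  simp only [Function.comp_apply]
  push_cast
  ring_nf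

end StirlingRemainder

section BinetFormula

variable {z : ℝ}

lemma binetKernel_mul_exp_div_sub (z : ℝ) {t : ℝ} (ht : 0 < t) :
    binetKernel t * exp (-z * t) / t - binetKernel t * exp (-(z + 1) * t) / t
      = (z + 1 / 2) * (exp (-z * t) * (1 - exp (-t)) / t)
        - exp (-z * t) * (z * (1 - exp (-t)) / t + (1 - (1 + t) * exp (-t)) / t ^ 2) := by
  have : 0 < exp t - 1 := by simpa using ht
  rw [binetKernel, exp_neg_add_mul, exp_neg t]
  field_simp
  ring

lemma binetIntegral_sub_binetIntegral_add_one (hz : 0 < z) :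
    binetIntegral z - binetIntegral (z + 1) = (z + 1 / 2) * log ((z + 1) / z) - 1 := by
  rw [binetIntegral, binetIntegral, ← integral_sub (integrableOn_binetKernel_mul_exp_div hz)
      (integrableOn_binetKernel_mul_exp_div (by linarith)),
    setIntegral_congr_fun measurableSet_Ioi fun t ht => binetKernel_mul_exp_div_sub z ht,
    integral_sub ((integrableOn_exp_neg_mul_one_sub_exp_neg_div hz).const_mul _)
      (integrableOn_neg_deriv_expSlope hz.le),
    integral_const_mul, integral_exp_neg_mul_one_sub_exp_neg_div hz,
    integral_neg_deriv_expSlope hz.le]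

theorem binetIntegral_eq_stirlingRemainder (hz : 0 < z) :
    binetIntegral z = stirlingRemainder z := by
  have hshift : ∀ n : ℕ, binetIntegral (z + n) - stirlingRemainder (z + n)
      = binetIntegral z - stirlingRemainder z := by
    intro n
    induction n with
    | zero => simp
    | succ n ih =>
      have hzn : 0 < z + n := by positivity
      have := (binetIntegral_sub_binetIntegral_add_one hzn).trans
        (stirlingRemainder_sub_stirlingRemainder_add_one hzn).symm
      rw [Nat.cast_succ, ← add_assoc]
      linarith
  have hlim := (tendsto_binetIntegral_atTop.comp
    (tendsto_atTop_add_const_left _ z tendsto_natCast_atTop_atTop)).sub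
    (tendsto_stirlingRemainder_add_natCast hz)
  rw [sub_zero] at hlim
  simp only [Function.comp_def, hshift, tendsto_const_nhds_iff] at hlim
  exact sub_eq_zero.1 hlim

end BinetFormula

lemma integrableOn_one_sub_one_add_mul_exp_neg_div_sq :
    IntegrableOn (fun t => (1 - (1 + t) * exp (-t)) / t ^ 2) (Ioi 0) := by
  simpa using integrableOn_neg_deriv_expSlope (z := 0) le_rfl

lemma integral_one_sub_one_add_mul_exp_neg_div_sq :
    ∫ t in Ioi 0, (1 - (1 + t) * exp (-t)) / t ^ 2 = 1 := by
  simpa using integral_neg_deriv_expSlope (z := 0) le_rfl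

section Rescaling

variable {a b : ℝ}

lemma binetKernel_comp_mul_eq (ha : 0 < a) (b : ℝ) {x : ℝ} :
    binetKernel (a * x) * exp (-b * x) / x
      = a * (binetKernel (a * x) * exp (-(b / a) * (a * x)) / (a * x)) := by
  rcases eq_or_ne x 0 with rfl | hx
  · simp
  · field_simp

lemma integrableOn_binetKernel_comp_mul (ha : 0 < a) (hb : 0 < b) :
    IntegrableOn (fun x => binetKernel (a * x) * exp (-b * x) / x) (Ioi 0) := by
  have := ((integrableOn_Ioi_comp_mul_left_iff
    (fun t => binetKernel t * exp (-(b / a) * t) / t) 0 ha).2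
    (by simpa using integrableOn_binetKernel_mul_exp_div (div_pos hb ha))).const_mul a
  exact IntegrableOn.congr_fun this (fun x _ => (binetKernel_comp_mul_eq ha b).symm)
    measurableSet_Ioi

lemma integral_binetKernel_comp_mul (ha : 0 < a) (b : ℝ) :
    ∫ x in Ioi 0, binetKernel (a * x) * exp (-b * x) / x = binetIntegral (b / a) := by
  simp_rw [binetKernel_comp_mul_eq ha b]
  rw [integral_const_mul,
    integral_comp_mul_left_Ioi (fun t => binetKernel t * exp (-(b / a) * t) / t) 0 ha,
    mul_zero, smul_eq_mul,
    mul_inv_cancel_left₀ ha.ne', binetIntegral]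

end Rescaling

/-- Binet-type integral evaluation: for `N > 0`,
`∫₀^∞ (e^{-x}/(x(1-e^{-Nx})) - 1/(Nx²) + (1/N-1/2)e^{-x}/x) dx
  = log Γ(1/N) + (1/2-1/N) log(1/N) - (1/2) log(2π)`. -/
theorem binet_integral (N : ℝ) (hN : 0 < N) :
    ∫ x in Set.Ioi (0 : ℝ),
        (Real.exp (-x) / (x * (1 - Real.exp (-(N * x)))) - 1 / (N * x ^ 2)
          + (1 / N - 1 / 2) * Real.exp (-x) / x)
      = Real.log (Real.Gamma (1 / N)) + (1 / 2 - 1 / N) * Real.log (1 / N)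
        - 1 / 2 * Real.log (2 * π) := by
  have hsplit : ∀ x ∈ Ioi (0 : ℝ),
      exp (-x) / (x * (1 - exp (-(N * x)))) - 1 / (N * x ^ 2) + (1 / N - 1 / 2) * exp (-x) / x
        = binetKernel (N * x) * exp (-1 * x) / x - 1 / N * ((1 - (1 + x) * exp (-x)) / x ^ 2) := by
    intro x (hx : 0 < x)
    have hE : 0 < exp (N * x) - 1 := by simpa using mul_pos hN hx
    rw [binetKernel, exp_neg (N * x)]
    generalize exp (N * x) = E at hE ⊢
    have : E ≠ 0 := by linarith
    field_simp
    ring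
  rw [setIntegral_congr_fun measurableSet_Ioi hsplit,
    integral_sub (integrableOn_binetKernel_comp_mul hN one_pos)
      (integrableOn_one_sub_one_add_mul_exp_neg_div_sq.const_mul _),
    integral_const_mul, integral_binetKernel_comp_mul hN,
    integral_one_sub_one_add_mul_exp_neg_div_sq,
    binetIntegral_eq_stirlingRemainder (by positivity), stirlingRemainder]
  ring
end
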